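/- Consider the scalar SCLP with G = 1, α > 0, a > 0, γ < 0, c > 0 and time horizon T > −γ/c. Then the supremum of the SCLP objective equals α(γ + cT) + acT²/2 + aγ(T + γ/(2c)), and this supremum is attained by the M-CLP extension (via a control with an impulse at 0) but is not attained by any SCLP solution (absolutely continuous control). -/

import Mathlib

/-!
Put τ = T + γ / c ∈ (0, T], so that the reward rate is γ + (T - t) c = c (τ - t), negative
after τ. For an absolutely continuous control with cumulative U(s) = ∫₀ˢ u, integration by
parts gives ∫₀^τ (τ - t) u(t) dt = ∫₀^τ U, so the objective is at most c ∫₀^τ U ≤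
c ∫₀^τ (α + a s). The last inequality is strict because U is continuous with U(0) = 0 < α.
Spreading the initial mass α uniformly over [0, ε] loses only c α ε / 2, so the bound is the
supremum; the M-CLP control with an atom α at 0 followed by rate a on (0, τ] attains it.
-/

open Set MeasureTheory

/-- Attainable objective values of the scalar SCLP (absolutely continuous
controls u). -/
def sclpValues (α a γ c T : ℝ) : Set ℝ :=
  {z | ∃ u : ℝ → ℝ, IntegrableOn u (Icc 0 T) ∧ (∀ t ∈ Icc (0:ℝ) T, 0 ≤ u t) ∧
    (∀ t ∈ Icc (0:ℝ) T, (∫ s in (0:ℝ)..t, u s) ≤ α + a * t) ∧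
    z = ∫ t in (0:ℝ)..T, (γ + (T - t) * c) * u t}

/-- Attainable objective values of the M-CLP extension (cumulative controls:
nonnegative, nondecreasing, right-continuous U with U(0-)=0, U(t) ≤ α+at). -/
def mclpValues (α a γ c T : ℝ) : Set ℝ :=
  {z | ∃ U : StieltjesFunction ℝ, (∀ t < (0:ℝ), U t = 0) ∧
    (∀ t ∈ Icc (0:ℝ) T, U t ≤ α + a * t) ∧
    z = ∫ t in Icc (0:ℝ) T, (γ + (T - t) * c) ∂U.measure}

theorem integral_sub_mul_eq_integral_primitive {u : ℝ → ℝ} {a b : ℝ}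
    (hu : IntervalIntegrable u volume a b) :
    ∫ t in a..b, (b - t) * u t = ∫ s in a..b, ∫ t in a..s, u t := by
  have hF := hu.absolutelyContinuousOnInterval_intervalIntegral (c := a) left_mem_uIcc
  have hg : AbsolutelyContinuousOnInterval (fun s => s - b) a b :=
    (contDiff_id.sub contDiff_const).contDiffOn.absolutelyContinuousOnInterval
  have hderiv : ∀ᵐ t, t ∈ uIoc a b →
      deriv (fun s => ∫ t in a..s, u t) t * (t - b) = u t * (t - b) := by
    filter_upwards [hu.ae_hasDerivAt_integral] with t ht ht'
    rw [(ht (uIoc_subset_uIcc ht') a left_mem_uIcc).deriv]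
  have ibp := hF.integral_mul_deriv_eq_deriv_mul hg
  simp only [deriv_sub_const, deriv_id'', mul_one, sub_self, mul_zero,
    intervalIntegral.integral_same, zero_mul, zero_sub] at ibp
  rw [ibp, intervalIntegral.integral_congr_ae hderiv, ← intervalIntegral.integral_neg]
  congr 1 with t
  ring

theorem integral_sub_mul_le_of_nonneg {u : ℝ → ℝ} {a τ T : ℝ} (haτ : a ≤ τ) (hτT : τ ≤ T)
    (hu : IntervalIntegrable u volume a T) (hu0 : ∀ t ∈ Icc τ T, 0 ≤ u t) :
    ∫ t in a..T, (τ - t) * u t ≤ ∫ t in a..τ, (τ - t) * u t := by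
  have hint : IntervalIntegrable (fun t => (τ - t) * u t) volume a T :=
    hu.continuousOn_mul (by fun_prop)
  have hsub : uIcc a τ ⊆ uIcc a T ∧ uIcc τ T ⊆ uIcc a T := by
    simp only [uIcc_of_le haτ, uIcc_of_le hτT, uIcc_of_le (haτ.trans hτT)]
    exact ⟨Icc_subset_Icc_right hτT, Icc_subset_Icc_left haτ⟩
  rw [← intervalIntegral.integral_add_adjacent_intervals (hint.mono_set hsub.1)
    (hint.mono_set hsub.2)]
  refine add_le_of_nonpos_right ?_
  rw [← neg_nonneg, ← intervalIntegral.integral_neg]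
  refine intervalIntegral.integral_nonneg hτT fun t ht => ?_
  have := mul_nonpos_of_nonpos_of_nonneg (sub_nonpos.2 ht.1) (hu0 t ht)
  linarith

theorem integral_primitive_lt {u : ℝ → ℝ} {α a τ : ℝ} (hα : 0 < α) (hτ : 0 < τ)
    (hu : IntervalIntegrable u volume 0 τ)
    (hU : ∀ s ∈ Ioc 0 τ, ∫ t in 0..s, u t ≤ α + a * s) :
    ∫ s in 0..τ, ∫ t in 0..s, u t < α * τ + a * τ ^ 2 / 2 := by
  have hcont : ContinuousOn (fun s => ∫ t in 0..s, u t) (Icc 0 τ) := by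
    simpa [uIcc_of_le hτ.le] using
      (hu.absolutelyContinuousOnInterval_intervalIntegral left_mem_uIcc).continuousOn
  calc ∫ s in 0..τ, ∫ t in 0..s, u t < ∫ s in 0..τ, (α + a * s) :=
        intervalIntegral.integral_lt_integral_of_continuousOn_of_le_of_exists_lt hτ hcont
          (by fun_prop) hU ⟨0, left_mem_Icc.2 hτ.le, by simpa using hα⟩
    _ = α * τ + a * τ ^ 2 / 2 := by
        rw [intervalIntegral.integral_add intervalIntegrable_const
          (intervalIntegral.intervalIntegrable_id.const_mul a),
          intervalIntegral.integral_const_mul, intervalIntegral.integral_const, integral_id,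
          smul_eq_mul]
        ring

theorem intervalIntegral.integral_indicator_Iic {f : ℝ → ℝ} {a b β : ℝ} (hab : a ≤ b)
    (haβ : a ≤ β) :
    ∫ t in a..b, (Iic β).indicator f t = ∫ t in a..min b β, f t := by
  rw [intervalIntegral.integral_of_le hab, intervalIntegral.integral_of_le (le_min hab haβ),
    MeasureTheory.integral_indicator measurableSet_Iic,
    Measure.restrict_restrict measurableSet_Iic, inter_comm, Ioc_inter_Iic]

theorem integral_const_sub_id (τ β : ℝ) : ∫ t in (0:ℝ)..β, (τ - t) = τ * β - β ^ 2 / 2 := by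
  rw [intervalIntegral.integral_sub intervalIntegrable_const
    intervalIntegral.intervalIntegrable_id, intervalIntegral.integral_const, integral_id,
    smul_eq_mul]
  ring

theorem exists_stieltjesFunction_measure_eq (μ : Measure ℝ) [IsFiniteMeasure μ] :
    ∃ F : StieltjesFunction ℝ, F.measure = μ ∧ ∀ x, F x = μ.real (Iic x) := by
  rcases eq_zero_or_neZero μ with rfl | _
  · exact ⟨0, by simp, by simp⟩
  have hμ : (μ.real univ).toNNReal • ((μ univ)⁻¹ • μ) = μ := by
    ext s
    rw [Measure.smul_apply, Measure.smul_apply, ENNReal.smul_def, smul_eq_mul, smul_eq_mul,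
      ENNReal.ofNNReal_toNNReal, ofReal_measureReal, ← mul_assoc,
      ENNReal.mul_inv_cancel (NeZero.ne _) (measure_ne_top _ _), one_mul]
  refine ⟨(μ.real univ).toNNReal • ProbabilityTheory.cdf ((μ univ)⁻¹ • μ), ?_, fun x => ?_⟩
  · rw [StieltjesFunction.measure_smul, ProbabilityTheory.measure_cdf, hμ]
  · conv_rhs => rw [← hμ]
    change _ * _ = _
    rw [ProbabilityTheory.cdf_eq_real]
    simp

section

variable {α a γ c T τ : ℝ}

theorem sclp_integrand_eq (hγ : γ = c * (τ - T)) (t : ℝ) : γ + (T - t) * c = c * (τ - t) := by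
  subst hγ; ring

theorem lt_of_mem_sclpValues (hα : 0 < α) (hc : 0 < c) (hτ : 0 < τ) (hτT : τ ≤ T)
    (hγ : γ = c * (τ - T)) {z : ℝ} (hz : z ∈ sclpValues α a γ c T) :
    z < c * (α * τ + a * τ ^ 2 / 2) := by
  obtain ⟨u, hu, hu0, hU, rfl⟩ := hz
  have hu' : IntervalIntegrable u volume 0 T :=
    (intervalIntegrable_iff_integrableOn_Icc_of_le (hτ.le.trans hτT)).2 hu
  have huτ : IntervalIntegrable u volume 0 τ :=
    (intervalIntegrable_iff_integrableOn_Icc_of_le hτ.le).2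
      (hu.mono_set (Icc_subset_Icc_right hτT))
  calc ∫ t in 0..T, (γ + (T - t) * c) * u t = c * ∫ t in 0..T, (τ - t) * u t := by
        simp only [sclp_integrand_eq hγ, mul_assoc, intervalIntegral.integral_const_mul]
    _ ≤ c * ∫ t in 0..τ, (τ - t) * u t := by
        gcongr
        exact integral_sub_mul_le_of_nonneg hτ.le hτT hu'
          fun t ht => hu0 t ⟨hτ.le.trans ht.1, ht.2⟩
    _ = c * ∫ s in 0..τ, ∫ t in 0..s, u t := by
        rw [integral_sub_mul_eq_integral_primitive huτ]
    _ < c * (α * τ + a * τ ^ 2 / 2) := by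
        gcongr
        exact integral_primitive_lt hα hτ huτ fun s hs => hU s ⟨hs.1.le, hs.2.trans hτT⟩

theorem sub_mem_sclpValues {ε : ℝ} (hα : 0 ≤ α) (ha : 0 ≤ a) (hε : 0 < ε) (hετ : ε ≤ τ)
    (hτT : τ ≤ T) (hγ : γ = c * (τ - T)) :
    c * (α * τ + a * τ ^ 2 / 2) - c * α * ε / 2 ∈ sclpValues α a γ c T := by
  have hτ : 0 ≤ τ := hε.le.trans hετ
  have hT : 0 ≤ T := hτ.trans hτT
  have hint : ∀ (f : ℝ → ℝ) (β b : ℝ), Continuous f →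
      IntervalIntegrable ((Iic β).indicator f) volume 0 b := fun f β b hf =>
    ⟨(hf.intervalIntegrable 0 b).1.indicator measurableSet_Iic,
      (hf.intervalIntegrable 0 b).2.indicator measurableSet_Iic⟩
  refine ⟨fun t => (Iic ε).indicator (fun _ => α / ε) t + (Iic τ).indicator (fun _ => a) t,
    ?_, fun t _ => ?_, fun t ht => ?_, ?_⟩
  · exact ((integrableOn_const measure_Icc_lt_top.ne).indicator measurableSet_Iic).add
      ((integrableOn_const measure_Icc_lt_top.ne).indicator measurableSet_Iic)
  · exact add_nonneg (indicator_nonneg (fun _ _ => by positivity) t)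
      (indicator_nonneg (fun _ _ => ha) t)
  · rw [intervalIntegral.integral_add (hint _ _ _ continuous_const) (hint _ _ _ continuous_const),
      intervalIntegral.integral_indicator_Iic ht.1 hε.le,
      intervalIntegral.integral_indicator_Iic ht.1 hτ]
    simp only [intervalIntegral.integral_const, sub_zero, smul_eq_mul]
    have h1 : min t ε * (α / ε) ≤ α := by
      calc min t ε * (α / ε) ≤ ε * (α / ε) := by gcongr; exact min_le_right _ _
        _ = α := by field_simp
    have h2 : min t τ * a ≤ a * t := by rw [mul_comm]; gcongr; exact min_le_left _ _
    linarith
  · have hsplit : ∀ t, (γ + (T - t) * c) *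
        ((Iic ε).indicator (fun _ => α / ε) t + (Iic τ).indicator (fun _ => a) t) =
        c * ((Iic ε).indicator (fun t => (τ - t) * (α / ε)) t +
          (Iic τ).indicator (fun t => (τ - t) * a) t) := fun t => by
      rw [sclp_integrand_eq hγ, indicator_mul_right, indicator_mul_right]; ring
    simp only [hsplit, intervalIntegral.integral_const_mul]
    rw [intervalIntegral.integral_add (hint _ _ _ (by fun_prop)) (hint _ _ _ (by fun_prop)),
      intervalIntegral.integral_indicator_Iic hT hε.le,
      intervalIntegral.integral_indicator_Iic hT hτ, min_eq_right (hετ.trans hτT),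
      min_eq_right hτT]
    simp only [intervalIntegral.integral_mul_const, integral_const_sub_id]
    field_simp
    ring

theorem mem_mclpValues (hα : 0 ≤ α) (ha : 0 ≤ a) (hτ : 0 ≤ τ) (hτT : τ ≤ T)
    (hγ : γ = c * (τ - T)) :
    c * (α * τ + a * τ ^ 2 / 2) ∈ mclpValues α a γ c T := by
  set μ : Measure ℝ := α.toNNReal • Measure.dirac 0 + a.toNNReal • volume.restrict (Icc 0 τ)
  have hμ : ∀ t, μ.real (Iic t) =
      α * (Measure.dirac 0).real (Iic t) + a * volume.real (Iic t ∩ Icc 0 τ) := fun t => by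
    rw [measureReal_add_apply, measureReal_nnreal_smul_apply, measureReal_nnreal_smul_apply,
      Real.coe_toNNReal _ hα, Real.coe_toNNReal _ ha, measureReal_restrict_apply measurableSet_Iic]
  obtain ⟨F, hFμ, hF⟩ := exists_stieltjesFunction_measure_eq μ
  refine ⟨F, fun t ht => ?_, fun t ht => ?_, ?_⟩
  · have h0 : (Measure.dirac (0:ℝ)).real (Iic t) = 0 := by
      simp [measureReal_def, Measure.dirac_apply' _ measurableSet_Iic, ht.not_ge]
    have h1 : Iic t ∩ Icc 0 τ = ∅ := by
      ext s; simp only [mem_inter_iff, mem_Iic, mem_Icc, mem_empty_iff_false, iff_false]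
      intro h; linarith [h.1, h.2.1]
    rw [hF, hμ, h0, h1]
    simp
  · have h0 : (Measure.dirac (0:ℝ)).real (Iic t) ≤ 1 := measureReal_le_one
    have h1 : volume.real (Iic t ∩ Icc 0 τ) ≤ t := by
      calc volume.real (Iic t ∩ Icc 0 τ) ≤ volume.real (Icc 0 t) :=
            measureReal_mono (fun s hs => ⟨hs.2.1, hs.1⟩) measure_Icc_lt_top.ne
        _ = t := by simp [ht.1]
    rw [hF, hμ]
    have := mul_le_of_le_one_right hα h0
    have := mul_le_mul_of_nonneg_left h1 ha
    linarith
  · have hf : Continuous fun t => γ + (T - t) * c := by fun_prop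
    classical
    rw [hFμ, Measure.restrict_add, integral_add_measure hf.integrableOn_Icc hf.integrableOn_Icc,
      Measure.restrict_smul, Measure.restrict_smul, integral_smul_nnreal_measure,
      integral_smul_nnreal_measure, setIntegral_dirac, if_pos ⟨le_rfl, hτ.trans hτT⟩,
      Measure.restrict_restrict measurableSet_Icc, inter_eq_right.mpr (Icc_subset_Icc_right hτT),
      integral_Icc_eq_integral_Ioc, ← intervalIntegral.integral_of_le hτ]
    simp only [sclp_integrand_eq hγ, intervalIntegral.integral_const_mul, integral_const_sub_id,
      NNReal.smul_def, Real.coe_toNNReal _ hα, Real.coe_toNNReal _ ha, smul_eq_mul]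
    ring

end

/-- Scalar SCLP with α > 0, a > 0, γ < 0, c > 0 and T > -γ/c: the supremum of
the SCLP objective equals α(γ+cT) + acT²/2 + aγ(T+γ/(2c)); it is attained by
the M-CLP extension but by no SCLP (absolutely continuous) solution. -/
theorem sclp_case2_sup_not_attained (α a γ c T : ℝ)
    (hα : 0 < α) (ha : 0 < a) (hγ : γ < 0) (hc : 0 < c) (hT : -γ / c < T) :
    sSup (sclpValues α a γ c T)
        = α * (γ + c * T) + a * c * T ^ 2 / 2 + a * γ * (T + γ / (2 * c)) ∧
    (α * (γ + c * T) + a * c * T ^ 2 / 2 + a * γ * (T + γ / (2 * c)))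
        ∉ sclpValues α a γ c T ∧
    (α * (γ + c * T) + a * c * T ^ 2 / 2 + a * γ * (T + γ / (2 * c)))
        ∈ mclpValues α a γ c T := by
  set τ := T + γ / c with hτ_def
  have hγτ : γ = c * (τ - T) := by rw [hτ_def]; field_simp; ring
  have hτ : 0 < τ := by linarith [neg_div c γ]
  have hτT : τ ≤ T := by linarith [div_neg_of_neg_of_pos hγ hc]
  have hvalue : α * (γ + c * T) + a * c * T ^ 2 / 2 + a * γ * (T + γ / (2 * c))
      = c * (α * τ + a * τ ^ 2 / 2) := by
    rw [hτ_def]; field_simp; ring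
  have hlt := fun z (hz : z ∈ sclpValues α a γ c T) => lt_of_mem_sclpValues hα hc hτ hτT hγτ hz
  rw [hvalue]
  refine ⟨csSup_eq_of_forall_le_of_forall_lt_exists_gt
      ⟨_, sub_mem_sclpValues hα.le ha.le hτ le_rfl hτT hγτ⟩ (fun z hz => (hlt z hz).le)
      fun w hw => ?_, fun h => (hlt _ h).false, mem_mclpValues hα.le ha.le hτ.le hτT hγτ⟩
  set ε := min τ ((c * (α * τ + a * τ ^ 2 / 2) - w) / (c * α))
  have hε : 0 < ε := lt_min hτ (div_pos (sub_pos.2 hw) (by positivity))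
  have hεw : c * α * ε ≤ c * (α * τ + a * τ ^ 2 / 2) - w := by
    rw [mul_comm]; exact (le_div_iff₀ (by positivity)).1 (min_le_right _ _)
  exact ⟨_, sub_mem_sclpValues hα.le ha.le hε (min_le_left _ _) hτT hγτ, by linarith⟩
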